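/- arXiv:2007.07720 — 5 statements merged into one kernel-verified Lean document; each statement's English description precedes it below -/
import Mathlib

section
/- Let n ≥ 1, let A and B be finite sets with |A| = |B| = n, and let c, μ : A × B → ℝ with c(a,b) ≥ 0 for all (a,b). Let M ⊆ A × B be a matching (no two pairs of M share a vertex), let y_A : A → ℝ and y_B : B → ℝ be dual weights satisfying y_A(a) + y_B(b) ≤ c(a,b) + μ(a,b) for every (a,b) ∈ A × B and y_A(a) + y_B(b) = c(a,b) for every (a,b) ∈ M. Let t ≥ 0 and suppose y_B(b) ≥ t for every b ∈ B not matched by M and y_A(a) ≥ 0 for every a ∈ A not matched by M. Then for every bijection τ : B → A, (n − |M|) · t ≤ Σ_{b∈B} ( c(τ(b), b) + μ(τ(b), b) ). -/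
/-- Core inequality of Lemma `unmatchedrem`: for a feasible matching `M`
(duals bounded by cost plus additive error on all edges, tight on matching
edges) with free `B`-vertices having dual weight at least `t ≥ 0` and free
`A`-vertices having nonnegative dual weight, the number `n - |M|` of
unmatched vertices satisfies `(n - |M|)·t ≤ Σ_b (c(τ b, b) + μ(τ b, b))`
for every perfect matching `τ`. -/
theorem unmatched_remaining (n : ℕ) (hn : 1 ≤ n)
    (A B : Type*) [Fintype A] [Fintype B] [DecidableEq A] [DecidableEq B]
    (hA : Fintype.card A = n) (hB : Fintype.card B = n)
    (c μ : A × B → ℝ) (hc : ∀ a : A, ∀ b : B, 0 ≤ c (a, b))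
    (M : Finset (A × B))
    (hM : ∀ e ∈ M, ∀ e' ∈ M, e ≠ e' → e.1 ≠ e'.1 ∧ e.2 ≠ e'.2)
    (yA : A → ℝ) (yB : B → ℝ)
    (hfeas : ∀ a : A, ∀ b : B, yA a + yB b ≤ c (a, b) + μ (a, b))
    (htight : ∀ e ∈ M, yA e.1 + yB e.2 = c e)
    (t : ℝ) (ht : 0 ≤ t)
    (hfreeB : ∀ b : B, (∀ a : A, (a, b) ∉ M) → t ≤ yB b)
    (hfreeA : ∀ a : A, (∀ b : B, (a, b) ∉ M) → 0 ≤ yA a)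
    (τ : B ≃ A) :
    ((n : ℝ) - M.card) * t ≤ ∑ b : B, (c (τ b, b) + μ (τ b, b)) := by
  set MA := M.image Prod.fst with hMA
  set MB := M.image Prod.snd with hMB
  have hinjA : ∀ e ∈ M, ∀ e' ∈ M, e.1 = e'.1 → e = e' := by
    intro e he e' he' h
    by_contra hne
    exact (hM e he e' he' hne).1 h
  have hinjB : ∀ e ∈ M, ∀ e' ∈ M, e.2 = e'.2 → e = e' := by
    intro e he e' he' h
    by_contra hne
    exact (hM e he e' he' hne).2 h
  have hcardA : MA.card = M.card := Finset.card_image_of_injOn hinjA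
  have hcardB : MB.card = M.card := Finset.card_image_of_injOn hinjB
  have hMle : M.card ≤ n := by
    calc M.card = MA.card := hcardA.symm
    _ ≤ Fintype.card A := Finset.card_le_univ _
    _ = n := hA
  -- step 1: sum of duals bounded by sum of costs
  have h1 : ∑ b : B, (yA (τ b) + yB b) ≤ ∑ b : B, (c (τ b, b) + μ (τ b, b)) :=
    Finset.sum_le_sum fun b _ => hfeas (τ b) b
  have h2 : ∑ b : B, (yA (τ b) + yB b) = ∑ a : A, yA a + ∑ b : B, yB b := by
    rw [Finset.sum_add_distrib, Equiv.sum_comp τ yA]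
  -- sums over matched sets
  have hsumA : ∑ a ∈ MA, yA a = ∑ e ∈ M, yA e.1 := Finset.sum_image hinjA
  have hsumB : ∑ b ∈ MB, yB b = ∑ e ∈ M, yB e.2 := Finset.sum_image hinjB
  have hmatched : ∑ a ∈ MA, yA a + ∑ b ∈ MB, yB b = ∑ e ∈ M, c e := by
    rw [hsumA, hsumB, ← Finset.sum_add_distrib]
    exact Finset.sum_congr rfl htight
  have hmatched0 : 0 ≤ ∑ a ∈ MA, yA a + ∑ b ∈ MB, yB b := by
    rw [hmatched]
    exact Finset.sum_nonneg fun e _ => hc e.1 e.2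
  -- free vertices
  have hfreeA' : 0 ≤ ∑ a ∈ MAᶜ, yA a := by
    apply Finset.sum_nonneg
    intro a ha
    apply hfreeA
    intro b hab
    exact (Finset.mem_compl.mp ha) (Finset.mem_image.mpr ⟨(a, b), hab, rfl⟩)
  have hfreeB' : ((n : ℝ) - M.card) * t ≤ ∑ b ∈ MBᶜ, yB b := by
    have hcard : (MBᶜ.card : ℝ) = (n : ℝ) - M.card := by
      rw [Finset.card_compl, hcardB, hB]
      push_cast [Nat.cast_sub hMle]
      ring
    calc ((n : ℝ) - M.card) * t = MBᶜ.card * t := by rw [hcard]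
    _ = ∑ _b ∈ MBᶜ, t := by rw [Finset.sum_const, nsmul_eq_mul]
    _ ≤ ∑ b ∈ MBᶜ, yB b := by
        apply Finset.sum_le_sum
        intro b hb
        apply hfreeB
        intro a hab
        exact (Finset.mem_compl.mp hb) (Finset.mem_image.mpr ⟨(a, b), hab, rfl⟩)
  have hsplitA : ∑ a : A, yA a = ∑ a ∈ MA, yA a + ∑ a ∈ MAᶜ, yA a :=
    (Finset.sum_add_sum_compl MA yA).symm
  have hsplitB : ∑ b : B, yB b = ∑ b ∈ MB, yB b + ∑ b ∈ MBᶜ, yB b :=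
    (Finset.sum_add_sum_compl MB yB).symm
  calc ((n : ℝ) - M.card) * t
      ≤ ∑ a : A, yA a + ∑ b : B, yB b := by
        rw [hsplitA, hsplitB]; linarith
    _ = ∑ b : B, (yA (τ b) + yB b) := h2.symm
    _ ≤ ∑ b : B, (c (τ b, b) + μ (τ b, b)) := h1
end

section
/- Let V be a finite type with a potential f : V → ℝ and edge weights φ : V × V → ℝ defined on a set E of directed edges, such that f(u) − f(v) ≤ φ(u,v) for every edge (u,v) ∈ E (i.e., every slack s(u,v) = φ(u,v) − f(u) + f(v) is nonnegative). Let d : V → ℝ satisfy d(v) ≤ d(u) + s(u,v) for every edge (u,v) ∈ E, let λ ∈ ℝ, and define the updated potential f'(v) = f(v) + max(0, λ − d(v)). Then: (i) f'(u) − f'(v) ≤ φ(u,v) for every edge (u,v) ∈ E; and (ii) if an edge (u,v) ∈ E satisfies s(u,v) = 0 and d(u) = d(v), then f'(u) − f'(v) = φ(u,v). -/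
/-- Correctness of the dual adjustment: if every edge of `E` has nonnegative
slack `s(u,v) = φ(u,v) - f u + f v`, the distances `d` satisfy the relaxation
inequality `d v ≤ d u + s(u,v)` along each edge, and the updated potential is
`f' v = f v + max 0 (λ - d v)`, then every edge remains feasible, and every
zero-slack edge with `d u = d v` becomes (stays) tight. -/
theorem dual_adjustment (V : Type*) [Fintype V] (f : V → ℝ) (φ : V × V → ℝ)
    (E : Set (V × V))
    (hfeas : ∀ e ∈ E, f e.1 - f e.2 ≤ φ e)
    (d : V → ℝ)
    (hd : ∀ e ∈ E, d e.2 ≤ d e.1 + (φ e - f e.1 + f e.2))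
    (lam : ℝ) (f' : V → ℝ)
    (hf' : ∀ v : V, f' v = f v + max 0 (lam - d v)) :
    (∀ e ∈ E, f' e.1 - f' e.2 ≤ φ e) ∧
    (∀ e ∈ E, φ e - f e.1 + f e.2 = 0 → d e.1 = d e.2 →
      f' e.1 - f' e.2 = φ e) := by
  constructor
  · intro e he
    have h1 := hfeas e he
    have h2 := hd e he
    rw [hf' e.1, hf' e.2]
    rcases le_or_gt (lam - d e.1) 0 with h | h
    · have : max 0 (lam - d e.1) = 0 := max_eq_left h
      rw [this]
      have : 0 ≤ max 0 (lam - d e.2) := le_max_left _ _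
      linarith
    · rw [max_eq_right h.le]
      have : lam - d e.2 ≤ max 0 (lam - d e.2) := le_max_right _ _
      linarith
  · intro e he hs hdeq
    have h1 := hfeas e he
    rw [hf' e.1, hf' e.2, hdeq]
    linarith
end

section
/- Let n ≥ 1 be an integer and 0 < ε ≤ 1. Let â_i, b̂_i, a_i, b_i ∈ ℝ² for i = 1,…,n with ‖a_i − â_i‖ ≤ 1 and ‖b_i − b̂_i‖ ≤ 1 for every i, and suppose 256n/ε² ≤ Σ_{i=1}^n ‖â_i − b̂_i‖² ≤ 512n/ε². Then Σ_{i=1}^n ‖a_i − b_i‖² ≤ (1+ε) Σ_{i=1}^n ‖â_i − b̂_i‖². -/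
/-- Rounding lemma: if each point is moved by at most `1` and the original
squared-Euclidean matching cost lies in `[256n/ε², 512n/ε²]`, then the
rounded matching cost is at most `(1+ε)` times the original cost. -/
theorem rounding_distortion (n : ℕ) (hn : 1 ≤ n)
    (ε : ℝ) (hε0 : 0 < ε) (hε1 : ε ≤ 1)
    (ahat bhat a b : Fin n → EuclideanSpace ℝ (Fin 2))
    (ha : ∀ i, ‖a i - ahat i‖ ≤ 1) (hb : ∀ i, ‖b i - bhat i‖ ≤ 1)
    (hlo : 256 * n / ε ^ 2 ≤ ∑ i, ‖ahat i - bhat i‖ ^ 2)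
    (hhi : ∑ i, ‖ahat i - bhat i‖ ^ 2 ≤ 512 * n / ε ^ 2) :
    ∑ i, ‖a i - b i‖ ^ 2 ≤ (1 + ε) * ∑ i, ‖ahat i - bhat i‖ ^ 2 := by
  set S := ∑ i, ‖ahat i - bhat i‖ ^ 2 with hS
  have key : ∀ i, ‖a i - b i‖ ^ 2 ≤ (1 + ε / 8) * ‖ahat i - bhat i‖ ^ 2 + (32 / ε + 4) := by
    intro i
    set d := ‖ahat i - bhat i‖ with hd
    have hd0 : 0 ≤ d := norm_nonneg _
    have htri : ‖a i - b i‖ ≤ d + 2 := by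
      have : a i - b i = (a i - ahat i) + (ahat i - bhat i) + (bhat i - b i) := by abel
      rw [this]
      calc ‖(a i - ahat i) + (ahat i - bhat i) + (bhat i - b i)‖
          ≤ ‖(a i - ahat i) + (ahat i - bhat i)‖ + ‖bhat i - b i‖ := norm_add_le _ _
        _ ≤ ‖a i - ahat i‖ + ‖ahat i - bhat i‖ + ‖bhat i - b i‖ := by
            have := norm_add_le (a i - ahat i) (ahat i - bhat i); linarith
        _ ≤ d + 2 := by
            have h1 := ha i
            have h2 : ‖bhat i - b i‖ ≤ 1 := by rw [norm_sub_rev]; exact hb i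
            linarith
    have hsq : ‖a i - b i‖ ^ 2 ≤ (d + 2) ^ 2 := by
      have h0 : 0 ≤ ‖a i - b i‖ := norm_nonneg _
      nlinarith
    have hq : (d + 2) ^ 2 ≤ (1 + ε / 8) * d ^ 2 + (32 / ε + 4) := by
      have h1 : 0 ≤ (ε * d - 16) ^ 2 := sq_nonneg _
      have h2 : (ε * d - 16) ^ 2 / (8 * ε) ≤ ε * d ^ 2 / 8 - 4 * d + 32 / ε := by
        rw [div_le_iff₀ (by positivity)]
        field_simp
        ring_nf
        nlinarith [sq_nonneg d, hε0.le]
      have h3 : 0 ≤ (ε * d - 16) ^ 2 / (8 * ε) := by positivity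
      nlinarith
    linarith
  have hsum : ∑ i, ‖a i - b i‖ ^ 2 ≤ (1 + ε / 8) * S + (32 / ε + 4) * n := by
    calc ∑ i, ‖a i - b i‖ ^ 2
        ≤ ∑ i : Fin n, ((1 + ε / 8) * ‖ahat i - bhat i‖ ^ 2 + (32 / ε + 4)) :=
          Finset.sum_le_sum fun i _ => key i
      _ = (1 + ε / 8) * S + (32 / ε + 4) * n := by
          rw [Finset.sum_add_distrib, ← Finset.mul_sum, Finset.sum_const, Finset.card_univ,
            Fintype.card_fin, nsmul_eq_mul, mul_comm]
          ring
  have hn1 : (1 : ℝ) ≤ n := by exact_mod_cast hn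
  have hlo' : 256 * n ≤ ε ^ 2 * S := by
    have := (div_le_iff₀ (by positivity : (0:ℝ) < ε ^ 2)).mp hlo
    linarith [this]
  -- need (32/ε + 4) * n ≤ (7ε/8) * S
  have hfinal : (32 / ε + 4) * n ≤ (7 * ε / 8) * S := by
    have h4n : (4 : ℝ) * n ≤ 4 * n / ε := by
      rw [le_div_iff₀ hε0]; nlinarith
    have h36 : (32 / ε + 4) * n ≤ 36 * n / ε := by
      rw [add_mul, div_mul_eq_mul_div]
      have : (32 : ℝ) * n / ε + 4 * n / ε = 36 * n / ε := by ring
      linarith [h4n, this.le]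
    have h224 : 36 * n / ε ≤ (7 * ε / 8) * S := by
      rw [div_le_iff₀ hε0]
      nlinarith
    linarith
  nlinarith
end

section
/- Let n ≥ 1 and let a, b : Fin n → ℝ² be two sets of n points in the plane. Define the bottleneck value β = min over bijections σ : Fin n ≃ Fin n of max_{i} ‖a(σ(i)) − b(i)‖. If σ : Fin n ≃ Fin n is a bijection with ‖a(σ(i)) − b(i)‖ ≤ 2n²β for every i, then Σ_{i} ‖a(σ(i)) − b(i)‖² ≤ 4n⁵ · min over bijections τ of Σ_{i} ‖a(τ(i)) − b(i)‖². -/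
/-- A `2n²`-approximate bottleneck matching has squared-Euclidean cost within
a factor `4n⁵` of the optimal squared-Euclidean matching cost. -/
theorem approx_bottleneck_rms (n : ℕ) (hn : 1 ≤ n)
    (a b : Fin n → EuclideanSpace ℝ (Fin 2)) (β : ℝ)
    (hβ : β = ⨅ σ : Equiv.Perm (Fin n), ⨆ i : Fin n, ‖a (σ i) - b i‖)
    (σ : Equiv.Perm (Fin n))
    (hσ : ∀ i : Fin n, ‖a (σ i) - b i‖ ≤ 2 * n ^ 2 * β) :
    ∑ i : Fin n, ‖a (σ i) - b i‖ ^ 2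
      ≤ 4 * n ^ 5 * ⨅ τ : Equiv.Perm (Fin n), ∑ i : Fin n, ‖a (τ i) - b i‖ ^ 2 := by
  have hne : Nonempty (Fin n) := ⟨⟨0, hn⟩⟩
  have hβ0 : 0 ≤ β := by
    rw [hβ]
    apply le_ciInf
    intro τ
    exact le_ciSup_of_le (Set.Finite.bddAbove (Set.finite_range _))
      (Classical.arbitrary _) (norm_nonneg _)
  have key : β ^ 2 ≤ ⨅ τ : Equiv.Perm (Fin n), ∑ i : Fin n, ‖a (τ i) - b i‖ ^ 2 := by
    apply le_ciInf
    intro τ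
    obtain ⟨i₀, hi₀⟩ := Finite.exists_max (fun i => ‖a (τ i) - b i‖)
    have hβle : β ≤ ‖a (τ i₀) - b i₀‖ := by
      rw [hβ]
      exact ciInf_le_of_le (Set.Finite.bddBelow (Set.finite_range _)) τ (ciSup_le hi₀)
    calc β ^ 2 ≤ ‖a (τ i₀) - b i₀‖ ^ 2 := pow_le_pow_left₀ hβ0 hβle 2
      _ ≤ _ := Finset.single_le_sum (f := fun i => ‖a (τ i) - b i‖ ^ 2) (fun i _ => sq_nonneg _) (Finset.mem_univ i₀)
  have step1 : ∑ i : Fin n, ‖a (σ i) - b i‖ ^ 2 ≤ n * (2 * n ^ 2 * β) ^ 2 := by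
    calc ∑ i : Fin n, ‖a (σ i) - b i‖ ^ 2 ≤ ∑ _i : Fin n, (2 * n ^ 2 * β) ^ 2 :=
        Finset.sum_le_sum (fun i _ => pow_le_pow_left₀ (norm_nonneg _) (hσ i) 2)
      _ = n * (2 * n ^ 2 * β) ^ 2 := by simp [Finset.sum_const]
  have heq : (n : ℝ) * (2 * n ^ 2 * β) ^ 2 = 4 * n ^ 5 * β ^ 2 := by ring
  calc ∑ i : Fin n, ‖a (σ i) - b i‖ ^ 2 ≤ 4 * n ^ 5 * β ^ 2 := by linarith
    _ ≤ _ := mul_le_mul_of_nonneg_left key (by positivity)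
end

section
/- Let n ≥ 1 be an integer and 0 < ε ≤ 1, and set L = 2048·n³/ε². Let (p_i, q_i) ∈ ℝ² × ℝ² for i = 1, …, n be pairs of points with ‖p_i − q_i‖² ≤ 512n/ε² for every i, and let (x, y) be uniformly distributed on [0, L]² (viewing the plane as tiled by a grid of axis-parallel square cells of side length L shifted by (x, y)). Then the probability that there exists some i such that p_i and q_i lie in different cells of the shifted grid — i.e., ⌊(p_{i,1} + x)/L⌋ ≠ ⌊(q_{i,1} + x)/L⌋ or ⌊(p_{i,2} + y)/L⌋ ≠ ⌊(q_{i,2} + y)/L⌋ — is at most 1/n. -/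
open MeasureTheory

lemma grid_floor_ne_subset (L a b : ℝ) (hL : 0 < L) (hab : a ≤ b) (hbL : b ≤ a + L) :
    {x : ℝ | x ∈ Set.Icc 0 L ∧ ⌊(a + x) / L⌋ ≠ ⌊(b + x) / L⌋} ⊆
      Set.Ico (((⌊a / L⌋ : ℝ) + 1) * L - b) (((⌊a / L⌋ : ℝ) + 1) * L - a) ∪
      Set.Ico (((⌊a / L⌋ : ℝ) + 2) * L - b) (((⌊a / L⌋ : ℝ) + 2) * L - a) := by
  rintro x ⟨⟨hx0, hxL⟩, hne⟩
  have hle : ⌊(a + x) / L⌋ ≤ ⌊(b + x) / L⌋ := by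
    apply Int.floor_le_floor
    gcongr
  have hlt : ⌊(a + x) / L⌋ < ⌊(b + x) / L⌋ := lt_of_le_of_ne hle hne
  set k := ⌊(b + x) / L⌋ with hk
  have h1 : (k : ℝ) * L ≤ b + x := by
    have := Int.floor_le ((b + x) / L)
    rw [← hk] at this
    calc (k:ℝ) * L ≤ ((b+x)/L) * L := by gcongr
      _ = b + x := by field_simp
  have h2 : a + x < (k : ℝ) * L := by
    have h3 : (a + x) / L < (⌊(a + x) / L⌋ : ℝ) + 1 := Int.lt_floor_add_one _
    have h4 : ((⌊(a + x) / L⌋ : ℝ) + 1) ≤ k := by exact_mod_cast hlt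
    have := (div_lt_iff₀ hL).mp (lt_of_lt_of_le h3 h4)
    linarith
  have hk1 : ⌊a / L⌋ + 1 ≤ k := by
    have : a / L < (k : ℝ) := by
      rw [div_lt_iff₀ hL]; linarith
    have := Int.floor_lt.mpr this
    omega
  have hk2 : k ≤ ⌊a / L⌋ + 2 := by
    have : (k : ℝ) - 2 ≤ a / L := by
      rw [sub_le_iff_le_add, div_add' _ _ _ hL.ne', le_div_iff₀ hL]
      linarith
    have : ((k - 2 : ℤ) : ℝ) ≤ a / L := by push_cast; linarith
    have := Int.le_floor.mpr this
    omega
  have hcase : k = ⌊a / L⌋ + 1 ∨ k = ⌊a / L⌋ + 2 := by omega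
  rcases hcase with h | h
  · left
    constructor
    · have : ((⌊a / L⌋ : ℝ) + 1) = (k : ℝ) := by rw [h]; push_cast; ring
      rw [this]; linarith
    · have : ((⌊a / L⌋ : ℝ) + 1) = (k : ℝ) := by rw [h]; push_cast; ring
      rw [this]; linarith
  · right
    constructor
    · have : ((⌊a / L⌋ : ℝ) + 2) = (k : ℝ) := by rw [h]; push_cast; ring
      rw [this]; linarith
    · have : ((⌊a / L⌋ : ℝ) + 2) = (k : ℝ) := by rw [h]; push_cast; ring
      rw [this]; linarith

lemma grid_oneD_cover (L a b d : ℝ) (hL : 0 < L) (hd : |a - b| ≤ d) (hdL : d ≤ L) :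
    ∃ S : Set ℝ, volume S ≤ ENNReal.ofReal (2 * d) ∧
      {x : ℝ | x ∈ Set.Icc 0 L ∧ ⌊(a + x) / L⌋ ≠ ⌊(b + x) / L⌋} ⊆ S := by
  set a' := min a b with ha'
  set b' := max a b with hb'
  have hab' : a' ≤ b' := min_le_max
  have hlen : b' - a' = |a - b| := by
    rcases le_total a b with h | h
    · rw [ha', hb', min_eq_left h, max_eq_right h, abs_sub_comm, abs_of_nonneg (by linarith)]
    · rw [ha', hb', min_eq_right h, max_eq_left h, abs_of_nonneg (by linarith)]
  have hd0 : 0 ≤ d := le_trans (abs_nonneg _) hd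
  have hbL' : b' ≤ a' + L := by linarith [hlen ▸ hd, hdL]
  refine ⟨Set.Ico (((⌊a' / L⌋ : ℝ) + 1) * L - b') (((⌊a' / L⌋ : ℝ) + 1) * L - a') ∪
      Set.Ico (((⌊a' / L⌋ : ℝ) + 2) * L - b') (((⌊a' / L⌋ : ℝ) + 2) * L - a'), ?_, ?_⟩
  · calc volume (Set.Ico (((⌊a' / L⌋ : ℝ) + 1) * L - b') (((⌊a' / L⌋ : ℝ) + 1) * L - a') ∪
        Set.Ico (((⌊a' / L⌋ : ℝ) + 2) * L - b') (((⌊a' / L⌋ : ℝ) + 2) * L - a'))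
        ≤ _ + _ := measure_union_le _ _
      _ ≤ ENNReal.ofReal (2 * d) := by
          rw [Real.volume_Ico, Real.volume_Ico]
          have h1 : (((⌊a' / L⌋ : ℝ) + 1) * L - a') - (((⌊a' / L⌋ : ℝ) + 1) * L - b') = b' - a' := by ring
          have h2 : (((⌊a' / L⌋ : ℝ) + 2) * L - a') - (((⌊a' / L⌋ : ℝ) + 2) * L - b') = b' - a' := by ring
          rw [h1, h2, ← ENNReal.ofReal_add (by linarith [hlen ▸ hd, abs_nonneg (a-b)])
            (by linarith [hlen ▸ hd, abs_nonneg (a-b)])]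
          apply ENNReal.ofReal_le_ofReal
          rw [hlen] at *
          linarith
  · intro x hx
    apply grid_floor_ne_subset L a' b' hL hab' hbL'
    obtain ⟨hx1, hx2⟩ := hx
    refine ⟨hx1, ?_⟩
    rcases le_total a b with h | h
    · rwa [ha', hb', min_eq_left h, max_eq_right h]
    · rw [ha', hb', min_eq_right h, max_eq_left h]
      exact hx2.symm

/-- Grid-splitting safety: if every pair `(p i, q i)` has squared Euclidean
distance at most `512n/ε²` and the grid of cell side `L = 2048n³/ε²` is
shifted uniformly at random, then the probability that some pair is separated
by a cell boundary is at most `1/n`. -/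
theorem grid_splitting_safe (n : ℕ) (hn : 1 ≤ n) (ε : ℝ) (hε0 : 0 < ε)
    (hε1 : ε ≤ 1) (L : ℝ) (hL : L = 2048 * n ^ 3 / ε ^ 2)
    (p q : Fin n → EuclideanSpace ℝ (Fin 2))
    (hpq : ∀ i : Fin n, ‖p i - q i‖ ^ 2 ≤ 512 * n / ε ^ 2) :
    ((ENNReal.ofReal (L ^ 2))⁻¹ •
        volume.restrict (Set.Icc (0 : ℝ) L ×ˢ Set.Icc (0 : ℝ) L))
        {z : ℝ × ℝ | ∃ i : Fin n,
          ⌊(p i 0 + z.1) / L⌋ ≠ ⌊(q i 0 + z.1) / L⌋ ∨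
          ⌊(p i 1 + z.2) / L⌋ ≠ ⌊(q i 1 + z.2) / L⌋}
      ≤ ENNReal.ofReal (1 / n) := by
  have hn' : (1:ℝ) ≤ (n:ℝ) := by exact_mod_cast hn
  have hn0 : (0:ℝ) < (n:ℝ) := by linarith
  have hLpos : 0 < L := by rw [hL]; positivity
  set d := Real.sqrt (512 * n / ε ^ 2) with hd
  have hd0 : 0 ≤ d := Real.sqrt_nonneg _
  have ht1 : (1:ℝ) ≤ 512 * n / ε ^ 2 := by
    rw [le_div_iff₀ (by positivity)]
    nlinarith
  have hd512 : d ≤ 512 * n / ε ^ 2 := by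
    rw [hd]
    calc Real.sqrt (512 * n / ε ^ 2) ≤ Real.sqrt ((512 * n / ε ^ 2) ^ 2) :=
          Real.sqrt_le_sqrt (by nlinarith)
      _ = 512 * n / ε ^ 2 := Real.sqrt_sq (by positivity)
  have hdL : d ≤ L := by
    rw [hL]
    calc d ≤ 512 * n / ε ^ 2 := hd512
      _ ≤ 2048 * n ^ 3 / ε ^ 2 := by
          gcongr <;>
            nlinarith [mul_le_mul_of_nonneg_left (by nlinarith : (1:ℝ) ≤ (n:ℝ) ^ 2) hn0.le]
  have hcoord : ∀ i : Fin n, |p i 0 - q i 0| ≤ d ∧ |p i 1 - q i 1| ≤ d := by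
    intro i
    have hsub0 : (p i - q i) 0 = p i 0 - q i 0 := rfl
    have hsub1 : (p i - q i) 1 = p i 1 - q i 1 := rfl
    have hnorm : ‖p i - q i‖ ^ 2 = (p i 0 - q i 0) ^ 2 + (p i 1 - q i 1) ^ 2 := by
      rw [EuclideanSpace.norm_eq, Real.sq_sqrt (by positivity)]
      simp [Fin.sum_univ_two, hsub0, hsub1, Real.norm_eq_abs, sq_abs]
    have h := hpq i
    constructor <;>
    · rw [← Real.sqrt_sq_eq_abs, hd]
      apply Real.sqrt_le_sqrt
      nlinarith [sq_nonneg (p i 0 - q i 0), sq_nonneg (p i 1 - q i 1)]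
  rw [Measure.smul_apply, smul_eq_mul]
  have hbox : MeasurableSet (Set.Icc (0:ℝ) L ×ˢ Set.Icc (0:ℝ) L) :=
    measurableSet_Icc.prod measurableSet_Icc
  rw [Measure.restrict_apply' hbox]
  choose Sx hSxv hSxs using fun i : Fin n =>
    grid_oneD_cover L (p i 0) (q i 0) d hLpos (hcoord i).1 hdL
  choose Sy hSyv hSys using fun i : Fin n =>
    grid_oneD_cover L (p i 1) (q i 1) d hLpos (hcoord i).2 hdL
  have hsub : ({z : ℝ × ℝ | ∃ i : Fin n,
          ⌊(p i 0 + z.1) / L⌋ ≠ ⌊(q i 0 + z.1) / L⌋ ∨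
          ⌊(p i 1 + z.2) / L⌋ ≠ ⌊(q i 1 + z.2) / L⌋} ∩
        (Set.Icc (0:ℝ) L ×ˢ Set.Icc (0:ℝ) L)) ⊆
      ⋃ i : Fin n, (Sx i ×ˢ Set.Icc (0:ℝ) L ∪ Set.Icc (0:ℝ) L ×ˢ Sy i) := by
    rintro z ⟨⟨i, hz⟩, hz1, hz2⟩
    refine Set.mem_iUnion.mpr ⟨i, ?_⟩
    rcases hz with h | h
    · left; exact ⟨hSxs i ⟨hz1, h⟩, hz2⟩
    · right; exact ⟨hz1, hSys i ⟨hz2, h⟩⟩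
  have hterm : ∀ i : Fin n,
      volume (Sx i ×ˢ Set.Icc (0:ℝ) L ∪ Set.Icc (0:ℝ) L ×ˢ Sy i)
        ≤ ENNReal.ofReal (4 * d * L) := by
    intro i
    refine le_trans (measure_union_le _ _) ?_
    rw [MeasureTheory.Measure.volume_eq_prod, Measure.prod_prod, Measure.prod_prod,
      Real.volume_Icc, sub_zero]
    calc volume (Sx i) * ENNReal.ofReal L + ENNReal.ofReal L * volume (Sy i)
        ≤ ENNReal.ofReal (2 * d) * ENNReal.ofReal L +
          ENNReal.ofReal L * ENNReal.ofReal (2 * d) := by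
          gcongr
          exacts [hSxv i, hSyv i]
      _ = ENNReal.ofReal (4 * d * L) := by
          rw [← ENNReal.ofReal_mul (by positivity), ← ENNReal.ofReal_mul (by positivity),
            ← ENNReal.ofReal_add (by positivity) (by positivity)]
          ring_nf
  have hbound : volume (⋃ i : Fin n,
        (Sx i ×ˢ Set.Icc (0:ℝ) L ∪ Set.Icc (0:ℝ) L ×ˢ Sy i))
      ≤ ENNReal.ofReal ((n : ℝ) * (4 * d * L)) := by
    refine le_trans (measure_iUnion_le _) ?_
    rw [tsum_fintype]
    refine le_trans (Finset.sum_le_sum fun i _ => hterm i) ?_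
    rw [Finset.sum_const, Finset.card_univ, Fintype.card_fin, nsmul_eq_mul,
      ENNReal.ofReal_mul (p := (n:ℝ)) (by positivity), ENNReal.ofReal_natCast]
  have hreal : (n : ℝ) * (4 * d * L) ≤ L ^ 2 / n := by
    have hkey : 4 * (n : ℝ) ^ 2 * d ≤ L := by
      calc 4 * (n : ℝ) ^ 2 * d ≤ 4 * (n : ℝ) ^ 2 * (512 * n / ε ^ 2) := by gcongr
        _ = 2048 * n ^ 3 / ε ^ 2 := by ring
        _ = L := hL.symm
    rw [le_div_iff₀ hn0]
    nlinarith [hLpos.le]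
  have hmeas : volume ({z : ℝ × ℝ | ∃ i : Fin n,
          ⌊(p i 0 + z.1) / L⌋ ≠ ⌊(q i 0 + z.1) / L⌋ ∨
          ⌊(p i 1 + z.2) / L⌋ ≠ ⌊(q i 1 + z.2) / L⌋} ∩
        (Set.Icc (0:ℝ) L ×ˢ Set.Icc (0:ℝ) L)) ≤ ENNReal.ofReal (L ^ 2 / n) :=
    le_trans (measure_mono hsub) (le_trans hbound (ENNReal.ofReal_le_ofReal hreal))
  calc (ENNReal.ofReal (L ^ 2))⁻¹ * volume ({z : ℝ × ℝ | ∃ i : Fin n,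
          ⌊(p i 0 + z.1) / L⌋ ≠ ⌊(q i 0 + z.1) / L⌋ ∨
          ⌊(p i 1 + z.2) / L⌋ ≠ ⌊(q i 1 + z.2) / L⌋} ∩
        (Set.Icc (0:ℝ) L ×ˢ Set.Icc (0:ℝ) L))
      ≤ (ENNReal.ofReal (L ^ 2))⁻¹ * ENNReal.ofReal (L ^ 2 / n) := by gcongr
    _ = ENNReal.ofReal (L ^ 2 / n) / ENNReal.ofReal (L ^ 2) := by
        rw [ENNReal.div_eq_inv_mul]
    _ = ENNReal.ofReal ((L ^ 2 / n) / L ^ 2) :=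
        (ENNReal.ofReal_div_of_pos (by positivity : (0:ℝ) < L ^ 2)).symm
    _ = ENNReal.ofReal (1 / n) := by
        congr 1
        field_simp
end
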